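/- Fix an integer k ≥ 0 and a real number t > 0. Set H_k := ∑_{ℓ=1}^{k} 1/ℓ, H'_k := ∑_{ℓ=1}^{k} 1/ℓ², G_k := H_{2k} − H_k, and G̃_k := 8G_k² − 2H'_{2k} + H'_k + π²/6. Define f(s) := Γ(2k + 2s + 1)⁴ / (Γ(k + s + 1)⁸ · (k + s + 1/2)) · t^{k+s} for real s near 0 (Γ denotes the real Gamma function). Then f is twice differentiable at 0 and f''(0) = binom(2k,k)⁴ · t^k / (k + 1/2) · ( 8G̃_k − 16G_k/(k + 1/2) + 2/(k + 1/2)² + (16G_k − 2/(k + 1/2))·log t + (log t)² ). -/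

import Mathlib

/-- `H_k = ∑_{ℓ=1}^k 1/ℓ`. -/
noncomputable def Hsum (k : ℕ) : ℝ := ∑ ℓ ∈ Finset.Icc 1 k, (1 : ℝ) / ℓ

/-- `H'_k = ∑_{ℓ=1}^k 1/ℓ²`. -/
noncomputable def Hsum' (k : ℕ) : ℝ := ∑ ℓ ∈ Finset.Icc 1 k, (1 : ℝ) / (ℓ : ℝ) ^ 2

/-- `G_k = H_{2k} − H_k`. -/
noncomputable def Gk (k : ℕ) : ℝ := Hsum (2 * k) - Hsum k

/-- `G̃_k = 8G_k² − 2H'_{2k} + H'_k + π²/6`. -/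
noncomputable def Gtilde (k : ℕ) : ℝ :=
  8 * Gk k ^ 2 - 2 * Hsum' (2 * k) + Hsum' k + Real.pi ^ 2 / 6

/-- `f(s) = Γ(2k+2s+1)⁴ / (Γ(k+s+1)⁸·(k+s+1/2)) · t^{k+s}`. -/
noncomputable def f17 (k : ℕ) (t : ℝ) : ℝ → ℝ := fun s =>
  Real.Gamma (2 * (k : ℝ) + 2 * s + 1) ^ 4 /
      (Real.Gamma ((k : ℝ) + s + 1) ^ 8 * ((k : ℝ) + s + 1 / 2)) *
    t ^ ((k : ℝ) + s)

/-!
Near `s = 0` we have `f = exp ∘ log f`, so `f'' = f · ((log f)'² + (log f)'')`, and the derivatives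
of `log f` are combinations of `ψ = (log Γ)'` and `ψ'` at `2k + 2s + 1` and `k + s + 1`.
The recurrence `ψ(x + 1) = ψ(x) + 1/x` gives `ψ(n + 1) = ψ(1) + H_n` and
`ψ'(n + 1) = ψ'(1) - H'_n`, so it remains to find `ψ'(1)`. Differentiating the logarithms of the
reflection formula twice gives `ψ'(1/2) = π²/2`, and of the duplication formula twice gives
`ψ'(1/2) + ψ'(1) = 4 ψ'(1)`; hence `ψ'(1) = π²/6`, with no series needed.
-/

open Real Filter Set Topology

theorem HasDerivAt.comp_const_mul {𝕜 : Type*} [NontriviallyNormedField 𝕜] {f : 𝕜 → 𝕜} {f' : 𝕜}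
    (a x : 𝕜) (hf : HasDerivAt f f' (a * x)) : HasDerivAt (fun y => f (a * y)) (a * f') x := by
  have := hf.comp x ((hasDerivAt_id x).const_mul a)
  rwa [mul_one, mul_comm] at this

namespace Real

theorem contDiffAt_Gamma {x : ℝ} (hx : ∀ m : ℕ, x ≠ -m) {n : WithTop ℕ∞} :
    ContDiffAt ℝ n Gamma x := by
  have hΓ : (Complex.Gamma x)⁻¹ ≠ 0 :=
    inv_ne_zero (Complex.Gamma_ne_zero fun m h => hx m (by exact_mod_cast h))
  simpa [Complex.Gamma_ofReal] using
    ((Complex.differentiable_one_div_Gamma.contDiff (n := n)).contDiffAt.inv hΓ).real_of_complex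

noncomputable def digamma : ℝ → ℝ := deriv fun x => log (Gamma x)

noncomputable def trigamma : ℝ → ℝ := deriv digamma

variable {x : ℝ}

theorem contDiffAt_log_Gamma (hx : 0 < x) {n : WithTop ℕ∞} :
    ContDiffAt ℝ n (fun y => log (Gamma y)) x :=
  (contDiffAt_Gamma fun m => ((neg_nonpos.mpr m.cast_nonneg).trans_lt hx).ne').log
    (Gamma_pos_of_pos hx).ne'

theorem hasDerivAt_log_Gamma (hx : 0 < x) :
    HasDerivAt (fun y => log (Gamma y)) (digamma x) x :=
  ((contDiffAt_log_Gamma hx (n := 1)).differentiableAt one_ne_zero).hasDerivAt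

theorem hasDerivAt_digamma (hx : 0 < x) : HasDerivAt digamma (trigamma x) x :=
  (((contDiffAt_log_Gamma hx (n := 2)).derivWithin (m := 1) (by norm_num)).differentiableAt
    one_ne_zero).hasDerivAt

theorem log_Gamma_add_one (hx : 0 < x) : log (Gamma (x + 1)) = log x + log (Gamma x) := by
  rw [Gamma_add_one hx.ne', log_mul hx.ne' (Gamma_pos_of_pos hx).ne']

theorem digamma_add_one (hx : 0 < x) : digamma (x + 1) = digamma x + x⁻¹ := by
  have hev : (fun y => log (Gamma (y + 1))) =ᶠ[𝓝 x] fun y => log y + log (Gamma y) :=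
    (eventually_gt_nhds hx).mono fun y hy => log_Gamma_add_one hy
  refine ((hasDerivAt_log_Gamma (by linarith)).comp_add_const x 1).unique ?_
  rw [add_comm]
  exact ((hasDerivAt_log hx.ne').add (hasDerivAt_log_Gamma hx)).congr_of_eventuallyEq hev

theorem trigamma_add_one (hx : 0 < x) : trigamma (x + 1) = trigamma x - (x ^ 2)⁻¹ := by
  have hev : (fun y => digamma (y + 1)) =ᶠ[𝓝 x] fun y => digamma y + y⁻¹ :=
    (eventually_gt_nhds hx).mono fun y hy => digamma_add_one hy
  refine ((hasDerivAt_digamma (by linarith)).comp_add_const x 1).unique ?_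
  rw [sub_eq_add_neg]
  exact ((hasDerivAt_digamma hx).add (hasDerivAt_inv hx.ne')).congr_of_eventuallyEq hev

theorem digamma_nat_add_one (n : ℕ) : digamma (n + 1) = digamma 1 + Hsum n := by
  induction n with
  | zero => simp [Hsum]
  | succ n ih =>
    rw [Hsum, Finset.sum_Icc_succ_top (by omega), ← Hsum, Nat.cast_succ,
      digamma_add_one (by positivity), ih]
    ring

theorem trigamma_nat_add_one (n : ℕ) : trigamma (n + 1) = trigamma 1 - Hsum' n := by
  induction n with
  | zero => simp [Hsum']
  | succ n ih =>
    rw [Hsum', Finset.sum_Icc_succ_top (by omega), ← Hsum', Nat.cast_succ,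
      trigamma_add_one (by positivity), ih]
    ring

theorem sin_pi_mul_pos (hx : x ∈ Ioo 0 1) : 0 < sin (π * x) :=
  sin_pos_of_pos_of_lt_pi (mul_pos pi_pos hx.1) (mul_lt_of_lt_one_right pi_pos hx.2)

theorem log_Gamma_add_log_Gamma_one_sub (hx : x ∈ Ioo 0 1) :
    log (Gamma x) + log (Gamma (1 - x)) = log π - log (sin (π * x)) := by
  rw [← log_mul (Gamma_pos_of_pos hx.1).ne' (Gamma_pos_of_pos (sub_pos.mpr hx.2)).ne',
    Gamma_mul_Gamma_one_sub, log_div pi_pos.ne' (sin_pi_mul_pos hx).ne']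

theorem digamma_sub_digamma_one_sub (hx : x ∈ Ioo 0 1) :
    digamma x - digamma (1 - x) = -(π * cos (π * x) / sin (π * x)) := by
  have hev : (fun y => log (Gamma y) + log (Gamma (1 - y))) =ᶠ[𝓝 x]
      fun y => log π - log (sin (π * y)) :=
    (isOpen_Ioo.eventually_mem hx).mono fun y hy => log_Gamma_add_log_Gamma_one_sub hy
  have hsin : HasDerivAt (fun y => sin (π * y)) (π * cos (π * x)) x :=
    (hasDerivAt_sin (π * x)).comp_const_mul π x
  have hL := (hasDerivAt_log_Gamma hx.1).add
    ((hasDerivAt_log_Gamma (sub_pos.mpr hx.2)).comp_const_sub 1 x)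
  have hR := ((hasDerivAt_const x (log π)).sub (hsin.log (sin_pi_mul_pos hx).ne'))
  have := hL.unique (hR.congr_of_eventuallyEq hev)
  linarith

theorem trigamma_add_trigamma_one_sub (hx : x ∈ Ioo 0 1) :
    trigamma x + trigamma (1 - x) = π ^ 2 / sin (π * x) ^ 2 := by
  have hev : (fun y => digamma y - digamma (1 - y)) =ᶠ[𝓝 x]
      fun y => -(π * cos (π * y) / sin (π * y)) :=
    (isOpen_Ioo.eventually_mem hx).mono fun y hy => digamma_sub_digamma_one_sub hy
  have hsin : HasDerivAt (fun y => sin (π * y)) (π * cos (π * x)) x :=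
    (hasDerivAt_sin (π * x)).comp_const_mul π x
  have hcos : HasDerivAt (fun y => cos (π * y)) (π * -sin (π * x)) x :=
    (hasDerivAt_cos (π * x)).comp_const_mul π x
  have hL := (hasDerivAt_digamma hx.1).sub
    ((hasDerivAt_digamma (sub_pos.mpr hx.2)).comp_const_sub 1 x)
  have hne := (sin_pi_mul_pos hx).ne'
  have hR := ((hcos.const_mul π).div hsin hne).neg
  rw [← sub_neg_eq_add, hL.unique (hR.congr_of_eventuallyEq hev)]
  field_simp
  linear_combination sin_sq_add_cos_sq (π * x)

theorem trigamma_one_half : trigamma (1 / 2) = π ^ 2 / 2 := by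
  have h := trigamma_add_trigamma_one_sub (x := 1 / 2) (by norm_num)
  rw [mul_one_div, sin_pi_div_two] at h
  norm_num at h
  linarith

theorem log_Gamma_add_log_Gamma_add_half (hx : 0 < x) :
    log (Gamma x) + log (Gamma (x + 1 / 2)) =
      log (Gamma (2 * x)) + (1 - 2 * x) * log 2 + log √π := by
  rw [← log_mul (Gamma_pos_of_pos hx).ne' (Gamma_pos_of_pos (by linarith)).ne',
    Gamma_mul_Gamma_add_half, log_mul (by positivity) (sqrt_pos.mpr pi_pos).ne',
    log_mul (Gamma_pos_of_pos (by linarith)).ne' (by positivity), log_rpow two_pos]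

theorem digamma_add_digamma_add_half (hx : 0 < x) :
    digamma x + digamma (x + 1 / 2) = 2 * digamma (2 * x) - 2 * log 2 := by
  have hev : (fun y => log (Gamma y) + log (Gamma (y + 1 / 2))) =ᶠ[𝓝 x]
      fun y => log (Gamma (2 * y)) + (1 - 2 * y) * log 2 + log √π :=
    (eventually_gt_nhds hx).mono fun y hy => log_Gamma_add_log_Gamma_add_half hy
  have hL := (hasDerivAt_log_Gamma hx).add
    ((hasDerivAt_log_Gamma (by linarith)).comp_add_const x (1 / 2))
  have hR := (((hasDerivAt_log_Gamma (by linarith)).comp_const_mul 2 x).add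
    ((((hasDerivAt_id x).const_mul 2).const_sub 1).mul_const (log 2))).add_const (log √π)
  rw [hL.unique (hR.congr_of_eventuallyEq hev)]
  ring

theorem trigamma_add_trigamma_add_half (hx : 0 < x) :
    trigamma x + trigamma (x + 1 / 2) = 4 * trigamma (2 * x) := by
  have hev : (fun y => digamma y + digamma (y + 1 / 2)) =ᶠ[𝓝 x]
      fun y => 2 * digamma (2 * y) - 2 * log 2 :=
    (eventually_gt_nhds hx).mono fun y hy => digamma_add_digamma_add_half hy
  have hL := (hasDerivAt_digamma hx).add
    ((hasDerivAt_digamma (by linarith)).comp_add_const x (1 / 2))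
  have hR := (((hasDerivAt_digamma (by linarith)).comp_const_mul 2 x).const_mul 2).sub_const
    (2 * log 2)
  rw [hL.unique (hR.congr_of_eventuallyEq hev)]
  ring

theorem trigamma_one : trigamma 1 = π ^ 2 / 6 := by
  have h := trigamma_add_trigamma_add_half (x := 1 / 2) (by norm_num)
  norm_num [trigamma_one_half] at h
  linarith

end Real

theorem hasDerivAt_deriv_of_eventuallyEq_exp {f F F' : ℝ → ℝ} {F'' x : ℝ}
    (hf : f =ᶠ[𝓝 x] fun y => exp (F y)) (hF : ∀ᶠ y in 𝓝 x, HasDerivAt F (F' y) y)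
    (hF' : HasDerivAt F' F'' x) :
    HasDerivAt f (exp (F x) * F' x) x ∧
      HasDerivAt (deriv f) (exp (F x) * (F' x ^ 2 + F'')) x := by
  have hderiv : deriv f =ᶠ[𝓝 x] fun y => exp (F y) * F' y := by
    filter_upwards [hf.eventuallyEq_nhds, hF] with y hfy hFy
    rw [hfy.deriv_eq, hFy.exp.deriv]
  refine ⟨hF.self_of_nhds.exp.congr_of_eventuallyEq hf, ?_⟩
  refine ((hF.self_of_nhds.exp.mul hF').congr_of_eventuallyEq hderiv).congr_deriv ?_
  ring

noncomputable def logF17 (k : ℕ) (t s : ℝ) : ℝ :=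
  4 * log (Gamma (2 * s + (2 * k + 1))) - 8 * log (Gamma (s + (k + 1))) -
    log (s + (k + 1 / 2)) + (s + k) * log t

noncomputable def logDerivF17 (k : ℕ) (t s : ℝ) : ℝ :=
  8 * digamma (2 * s + (2 * k + 1)) - 8 * digamma (s + (k + 1)) - (s + (k + 1 / 2))⁻¹ + log t

section

variable (k : ℕ) {t s : ℝ}

theorem f17_eq_exp_logF17 (ht : 0 < t) (hs : -(1 / 2) < s) : f17 k t s = exp (logF17 k t s) := by
  have hk : (0 : ℝ) ≤ k := k.cast_nonneg
  have h2 : 0 < Gamma (2 * k + 2 * s + 1) := Gamma_pos_of_pos (by linarith)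
  have h1 : 0 < Gamma (k + s + 1) := Gamma_pos_of_pos (by linarith)
  have h0 : 0 < (k : ℝ) + s + 1 / 2 := by linarith
  have hf : 0 < f17 k t s := by
    unfold f17
    have := rpow_pos_of_pos ht (k + s)
    positivity
  rw [← exp_log hf, f17, log_mul (by positivity) (rpow_pos_of_pos ht _).ne',
    log_div (by positivity) (by positivity), log_mul (by positivity) (by positivity), log_pow,
    log_pow, log_rpow ht, logF17]
  ring_nf

theorem hasDerivAt_logF17 (hs : -(1 / 2) < s) :
    HasDerivAt (logF17 k t) (logDerivF17 k t s) s := by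
  have hk : (0 : ℝ) ≤ k := k.cast_nonneg
  have h2 := ((hasDerivAt_log_Gamma (x := 2 * s + (2 * k + 1)) (by linarith)).comp_add_const
    (2 * s) (2 * k + 1)).comp_const_mul 2 s
  have h1 := (hasDerivAt_log_Gamma (x := s + (k + 1)) (by linarith)).comp_add_const s (k + 1)
  have h0 := (hasDerivAt_log (x := s + (k + 1 / 2)) (by linarith)).comp_add_const s (k + 1 / 2)
  have hl := ((hasDerivAt_id s).add_const (k : ℝ)).mul_const (log t)
  refine ((((h2.const_mul 4).sub (h1.const_mul 8)).sub h0).add hl).congr_deriv ?_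
  simp only [logDerivF17]
  ring

theorem hasDerivAt_logDerivF17 (hs : -(1 / 2) < s) :
    HasDerivAt (logDerivF17 k t) (16 * trigamma (2 * s + (2 * k + 1)) -
      8 * trigamma (s + (k + 1)) + ((s + (k + 1 / 2)) ^ 2)⁻¹) s := by
  have hk : (0 : ℝ) ≤ k := k.cast_nonneg
  have h2 := ((hasDerivAt_digamma (x := 2 * s + (2 * k + 1)) (by linarith)).comp_add_const
    (2 * s) (2 * k + 1)).comp_const_mul 2 s
  have h1 := (hasDerivAt_digamma (x := s + (k + 1)) (by linarith)).comp_add_const s (k + 1)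
  have h0 := (hasDerivAt_inv (x := s + (k + 1 / 2)) (by linarith)).comp_add_const s (k + 1 / 2)
  refine ((((h2.const_mul 8).sub (h1.const_mul 8)).sub h0).add_const (log t)).congr_deriv ?_
  ring

theorem f17_zero : f17 k t 0 = (Nat.choose (2 * k) k : ℝ) ^ 4 * t ^ k / (k + 1 / 2) := by
  have hchoose : (Nat.choose (2 * k) k : ℝ) = (2 * k).factorial / (k.factorial * k.factorial) := by
    rw [Nat.cast_choose ℝ (by omega : k ≤ 2 * k), show 2 * k - k = k by omega]
  have hΓ2 : Gamma (2 * k + 2 * 0 + 1) = (2 * k).factorial := by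
    rw [← Gamma_nat_eq_factorial]
    push_cast
    ring_nf
  have hΓ1 : Gamma (k + 0 + 1) = k.factorial := by rw [add_zero, Gamma_nat_eq_factorial]
  rw [f17, hΓ2, hΓ1, add_zero, rpow_natCast, hchoose]
  field_simp

theorem logDerivF17_zero : logDerivF17 k t 0 = 8 * Gk k - ((k : ℝ) + 1 / 2)⁻¹ + log t := by
  have h := digamma_nat_add_one (2 * k)
  push_cast at h
  rw [logDerivF17, zero_add, mul_zero, zero_add, h, digamma_nat_add_one, Gk]
  ring

theorem hasDerivAt_logDerivF17_zero :
    HasDerivAt (logDerivF17 k t)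
      (8 * (π ^ 2 / 6) - 16 * Hsum' (2 * k) + 8 * Hsum' k + (((k : ℝ) + 1 / 2) ^ 2)⁻¹) 0 := by
  have h := trigamma_nat_add_one (2 * k)
  push_cast at h
  convert hasDerivAt_logDerivF17 k (t := t) (s := 0) (by norm_num) using 1
  rw [mul_zero, zero_add, zero_add, zero_add, h, trigamma_nat_add_one, trigamma_one]
  ring

end

theorem stmt17 (k : ℕ) (t : ℝ) (ht : 0 < t) :
    DifferentiableAt ℝ (f17 k t) 0 ∧
    DifferentiableAt ℝ (deriv (f17 k t)) 0 ∧
    iteratedDeriv 2 (f17 k t) 0 =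
      (Nat.choose (2 * k) k : ℝ) ^ 4 * t ^ k / ((k : ℝ) + 1 / 2) *
        (8 * Gtilde k - 16 * Gk k / ((k : ℝ) + 1 / 2) + 2 / ((k : ℝ) + 1 / 2) ^ 2 +
          (16 * Gk k - 2 / ((k : ℝ) + 1 / 2)) * Real.log t + Real.log t ^ 2) := by
  have hnhds : ∀ᶠ s in 𝓝 (0 : ℝ), -(1 / 2) < s := eventually_gt_nhds (by norm_num)
  obtain ⟨hd1, hd2⟩ := hasDerivAt_deriv_of_eventuallyEq_exp
    (hnhds.mono fun s hs => f17_eq_exp_logF17 k ht hs)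
    (hnhds.mono fun s hs => hasDerivAt_logF17 k hs)
    (hasDerivAt_logDerivF17_zero k)
  refine ⟨hd1.differentiableAt, hd2.differentiableAt, ?_⟩
  rw [iteratedDeriv_succ, iteratedDeriv_one, hd2.deriv, ← f17_eq_exp_logF17 k ht (by norm_num),
    f17_zero, logDerivF17_zero, Gtilde]
  have hk : (k : ℝ) + 1 / 2 ≠ 0 := by positivity
  field_simp
  ring
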